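/- Let G be a finite non-abelian AC-group (that is, the centralizer C_G(x) is abelian for every x ∈ G ∖ Z(G)), let X_1, X_2, …, X_n be the distinct centralizers of non-central elements of G, and let z = |Z(G)|. Then the CNL-spectrum of Γ_G is the multiset consisting of the eigenvalue 0 with multiplicity n together with, for each i = 1, …, n, the eigenvalue (|X_i| − z)(|X_i| − z − 2) with multiplicity |X_i| − z − 1; and the CNSL-spectrum of Γ_G is the multiset consisting of, for each i = 1, …, n, the eigenvalue 2(|X_i| − z − 1)(|X_i| − z − 2) with multiplicity 1 and the eigenvalue (|X_i| − z − 2)² with multiplicity |X_i| − z − 1. -/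

import Mathlib

open scoped Classical

noncomputable section

namespace CN

variable {V : Type*} [Fintype V] [DecidableEq V]

/-- The common neighborhood matrix of a finite simple graph: the `(i,j)` entry, for `i ≠ j`,
is the number of vertices distinct from `i` and `j` adjacent to both; diagonal entries are `0`. -/
def cnMatrix (G : SimpleGraph V) : Matrix V V ℝ := fun i j =>
  if i = j then 0
  else ((Finset.univ.filter fun x => x ≠ i ∧ x ≠ j ∧ G.Adj x i ∧ G.Adj x j).card : ℝ)

/-- The diagonal matrix of row sums of the common neighborhood matrix. -/
def cnrs (G : SimpleGraph V) : Matrix V V ℝ :=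
  Matrix.diagonal fun i => ∑ j, cnMatrix G i j

/-- The common neighborhood Laplacian matrix. -/
def cnl (G : SimpleGraph V) : Matrix V V ℝ := cnrs G - cnMatrix G

/-- The common neighborhood signless Laplacian matrix. -/
def cnsl (G : SimpleGraph V) : Matrix V V ℝ := cnrs G + cnMatrix G

/-- The CNL-spectrum: the multiset of eigenvalues (roots of the characteristic polynomial,
with multiplicity) of the common neighborhood Laplacian matrix. -/
def cnlSpec (G : SimpleGraph V) : Multiset ℝ := (cnl G).charpoly.roots

/-- The CNSL-spectrum. -/
def cnslSpec (G : SimpleGraph V) : Multiset ℝ := (cnsl G).charpoly.roots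

/-- `Δ_𝒢 = tr(CNRS(𝒢)) / |V(𝒢)|`. -/
def cnDelta (G : SimpleGraph V) : ℝ := (cnrs G).trace / (Fintype.card V : ℝ)

/-- The CNL-energy `LE_CN`. -/
def cnlEnergy (G : SimpleGraph V) : ℝ := ((cnlSpec G).map fun a => |a - cnDelta G|).sum

/-- The CNSL-energy `LE⁺_CN`. -/
def cnslEnergy (G : SimpleGraph V) : ℝ := ((cnslSpec G).map fun a => |a - cnDelta G|).sum

/-- A graph on `n` vertices is CNL-hyperenergetic if its CNL-energy exceeds that of
the complete graph `K_n`. -/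
def IsCNLHyperenergetic (G : SimpleGraph V) : Prop :=
  cnlEnergy (⊤ : SimpleGraph (Fin (Fintype.card V))) < cnlEnergy G

/-- A graph on `n` vertices is CNSL-hyperenergetic if its CNSL-energy exceeds that of
the complete graph `K_n`. -/
def IsCNSLHyperenergetic (G : SimpleGraph V) : Prop :=
  cnslEnergy (⊤ : SimpleGraph (Fin (Fintype.card V))) < cnslEnergy G

/-- The commuting graph of a group: vertices are the non-central elements, and two distinct
vertices are adjacent iff they commute. -/
def commutingGraph (G : Type*) [Group G] :
    SimpleGraph {g : G // g ∉ Subgroup.center G} where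
  Adj x y := x ≠ y ∧ (x : G) * y = (y : G) * x
  symm := ⟨fun _ _ h => ⟨h.1.symm, h.2.symm⟩⟩
  loopless := ⟨fun _ h => h.1 rfl⟩

end CN

open CN

/-!
In an AC-group two non-central elements commute exactly when they have the same centralizer,
so the commuting graph is the disjoint union of the complete graphs on the sets `X i \ Z(G)`,
of orders `m = |X i| - z`. In a disjoint union of cliques, two distinct vertices of a clique of
order `m` have `m - 2` common neighbours and vertices of different cliques have none, so `CNL`
and `CNSL` are block diagonal with blocks `c • 1 + d • (J - 1)`, `J` the all-ones matrix,
`c = (m - 1)(m - 2)` and `d = ∓(m - 2)`. Such a block is a scalar shift of the rank-one matrix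
`d • J`, hence has the eigenvalue `c - d` with multiplicity `m - 1` and the eigenvalue
`c + (m - 1) d` once.
-/

namespace Polynomial

theorem roots_X_sub_C_pow_mul_X_sub_C {R : Type*} [CommRing R] [IsDomain R] (k : ℕ) (a b : R) :
    ((X - C a) ^ k * (X - C b)).roots = Multiset.replicate k a + {b} := by
  rw [roots_mul (mul_ne_zero (pow_ne_zero _ (X_sub_C_ne_zero a)) (X_sub_C_ne_zero b)),
    roots_pow, roots_X_sub_C, roots_X_sub_C, Multiset.nsmul_singleton]

end Polynomial

namespace Matrix

open Polynomial

variable {R m ι : Type*} [CommRing R] [Fintype m] [DecidableEq m]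

theorem charpoly_of_ite_eq [Nonempty m] (c d : R) :
    (of fun i j : m => if i = j then c else d).charpoly =
      (X - C (c - d)) ^ (Fintype.card m - 1) * (X - C (c + (Fintype.card m - 1 : R) * d)) := by
  have hM : (of fun i j : m => if i = j then c else d) =
      vecMulVec (fun _ => d) (fun _ => 1) - scalar m (d - c) := by
    ext i j
    by_cases h : i = j <;> simp [h, vecMulVec_apply]
  obtain ⟨k, hk⟩ : ∃ k, Fintype.card m = k + 1 :=
    Nat.exists_eq_succ_of_ne_zero Fintype.card_ne_zero
  rw [hM, charpoly_sub_scalar, charpoly_vecMulVec]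
  simp [hk, dotProduct, smul_eq_C_mul, pow_succ]
  ring

-- `DecidableEq ι` is a separate argument, not the one of `LinearOrder ι`, so that `hM` can be
-- supplied by statements about `b` that know nothing of an order on `ι`.
theorem charpoly_eq_prod_of_apply_eq_ite [LinearOrder ι] [DecidableEq ι] [Fintype ι]
    {b : m → ι} (hb : Function.Surjective b) {M : Matrix m m R} {c d : ι → R}
    (hM : ∀ v w, M v w = if b v = b w then (if v = w then c (b v) else d (b v)) else 0) :
    M.charpoly = ∏ i, (X - C (c i - d i)) ^ (Nat.card {v // b v = i} - 1) *
      (X - C (c i + (Nat.card {v // b v = i} - 1 : R) * d i)) := by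
  have hblock : M.BlockTriangular b := fun v w h => by rw [hM, if_neg h.ne']
  rw [hblock.charpoly]
  refine Finset.prod_congr (Finset.eq_univ_of_forall fun i => ?_) fun i _ => ?_
  · obtain ⟨v, rfl⟩ := hb i
    simp
  have : Nonempty {v // b v = i} := let ⟨v, hv⟩ := hb i; ⟨⟨v, hv⟩⟩
  rw [Nat.card_eq_fintype_card]
  convert charpoly_of_ite_eq (m := {v // b v = i}) (c i) (d i) using 2
  ext v w
  simp [toSquareBlock_def, hM, v.2, w.2, Subtype.ext_iff]

theorem roots_charpoly_of_apply_eq_ite [IsDomain R] [LinearOrder ι] [DecidableEq ι] [Fintype ι]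
    {b : m → ι} (hb : Function.Surjective b) {M : Matrix m m R} {c d : ι → R}
    (hM : ∀ v w, M v w = if b v = b w then (if v = w then c (b v) else d (b v)) else 0) :
    M.charpoly.roots = ∑ i, (Multiset.replicate (Nat.card {v // b v = i} - 1) (c i - d i) +
      {c i + (Nat.card {v // b v = i} - 1 : R) * d i}) := by
  rw [charpoly_eq_prod_of_apply_eq_ite hb hM, roots_prod _ _ (Finset.prod_ne_zero_iff.mpr
    fun i _ => (((monic_X_sub_C _).pow _).mul (monic_X_sub_C _)).ne_zero)]
  simp only [roots_X_sub_C_pow_mul_X_sub_C]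
  rfl

end Matrix

namespace CN

variable {V ι : Type*} [Fintype V] [DecidableEq V] [DecidableEq ι] {G : SimpleGraph V}
  {b : V → ι}

theorem cnMatrix_apply_of_adj_iff (hG : ∀ v w, G.Adj v w ↔ v ≠ w ∧ b v = b w) (v w : V) :
    cnMatrix G v w = if b v = b w then
      (if v = w then 0 else (Nat.card {x // b x = b v} : ℝ) - 2) else 0 := by
  by_cases hvw : v = w
  · simp [cnMatrix, hvw]
  rw [cnMatrix, if_neg hvw, if_neg hvw]
  split_ifs with hb
  · have hcommon : (Finset.univ.filter fun x => x ≠ v ∧ x ≠ w ∧ G.Adj x v ∧ G.Adj x w) =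
        (Finset.univ.filter fun x => b x = b v) \ {v, w} := by
      ext x
      simp only [Finset.mem_filter, Finset.mem_univ, true_and, Finset.mem_sdiff,
        Finset.mem_insert, Finset.mem_singleton, hG, hb]
      tauto
    have hsub : {v, w} ⊆ Finset.univ.filter fun x => b x = b v := by
      simp [Finset.insert_subset_iff, hb]
    rw [hcommon, Nat.card_eq_fintype_card, Fintype.card_subtype,
      ← Finset.card_sdiff_add_card_eq_card hsub, Finset.card_pair hvw]
    push_cast
    ring
  · rw [Nat.cast_eq_zero, Finset.card_eq_zero, Finset.filter_eq_empty_iff]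
    intro x _ ⟨_, _, hxv, hxw⟩
    exact hb (((hG x v).1 hxv).2.symm.trans ((hG x w).1 hxw).2)

theorem sum_cnMatrix_of_adj_iff (hG : ∀ v w, G.Adj v w ↔ v ≠ w ∧ b v = b w) (v : V) :
    ∑ w, cnMatrix G v w = ((Nat.card {x // b x = b v} : ℝ) - 1) *
      ((Nat.card {x // b x = b v} : ℝ) - 2) := by
  set k : ℝ := (Nat.card {x // b x = b v} : ℝ)
  have hterm : ∀ w, cnMatrix G v w =
      (if b v = b w then k - 2 else 0) - (if v = w then k - 2 else 0) := by
    intro w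
    rw [cnMatrix_apply_of_adj_iff hG]
    by_cases hvw : v = w
    · simp [hvw]
    · simp [hvw, k]
  simp only [hterm, Finset.sum_sub_distrib, Finset.sum_ite_eq, Finset.mem_univ, if_true,
    Finset.sum_ite, Finset.sum_const_zero, add_zero, Finset.sum_const, nsmul_eq_mul]
  rw [show (Finset.univ.filter fun w => b v = b w).card = Nat.card {x // b x = b v} by
    rw [Nat.card_eq_fintype_card, Fintype.card_subtype]; simp only [eq_comm]]
  ring

theorem cnl_apply_of_adj_iff (hG : ∀ v w, G.Adj v w ↔ v ≠ w ∧ b v = b w) (v w : V) :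
    cnl G v w = if b v = b w then
      (if v = w then ((Nat.card {x // b x = b v} : ℝ) - 1) *
        ((Nat.card {x // b x = b v} : ℝ) - 2)
      else -((Nat.card {x // b x = b v} : ℝ) - 2)) else 0 := by
  rw [cnl, cnrs, Matrix.sub_apply, Matrix.diagonal_apply, sum_cnMatrix_of_adj_iff hG,
    cnMatrix_apply_of_adj_iff hG]
  by_cases hvw : v = w
  · simp [hvw]
  · simp only [hvw, if_false]
    split_ifs <;> ring

theorem cnsl_apply_of_adj_iff (hG : ∀ v w, G.Adj v w ↔ v ≠ w ∧ b v = b w) (v w : V) :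
    cnsl G v w = if b v = b w then
      (if v = w then ((Nat.card {x // b x = b v} : ℝ) - 1) *
        ((Nat.card {x // b x = b v} : ℝ) - 2)
      else (Nat.card {x // b x = b v} : ℝ) - 2) else 0 := by
  rw [cnsl, cnrs, Matrix.add_apply, Matrix.diagonal_apply, sum_cnMatrix_of_adj_iff hG,
    cnMatrix_apply_of_adj_iff hG]
  by_cases hvw : v = w
  · simp [hvw]
  · simp [hvw]

variable [LinearOrder ι] [Fintype ι]

theorem cnlSpec_of_adj_iff (hb : Function.Surjective b)
    (hG : ∀ v w, G.Adj v w ↔ v ≠ w ∧ b v = b w) :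
    cnlSpec G = ∑ i, (Multiset.replicate (Nat.card {v // b v = i} - 1)
      ((Nat.card {v // b v = i} : ℝ) * ((Nat.card {v // b v = i} : ℝ) - 2)) + {0}) := by
  rw [cnlSpec, Matrix.roots_charpoly_of_apply_eq_ite hb
    (c := fun i => ((Nat.card {v // b v = i} : ℝ) - 1) * ((Nat.card {v // b v = i} : ℝ) - 2))
    (d := fun i => -((Nat.card {v // b v = i} : ℝ) - 2)) (cnl_apply_of_adj_iff hG)]
  refine Finset.sum_congr rfl fun i _ => ?_
  congr 3 <;> ring

theorem cnslSpec_of_adj_iff (hb : Function.Surjective b)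
    (hG : ∀ v w, G.Adj v w ↔ v ≠ w ∧ b v = b w) :
    cnslSpec G = ∑ i, (Multiset.replicate (Nat.card {v // b v = i} - 1)
      (((Nat.card {v // b v = i} : ℝ) - 2) ^ 2) +
        {2 * ((Nat.card {v // b v = i} : ℝ) - 1) *
          ((Nat.card {v // b v = i} : ℝ) - 2)}) := by
  rw [cnslSpec, Matrix.roots_charpoly_of_apply_eq_ite hb
    (c := fun i => ((Nat.card {v // b v = i} : ℝ) - 1) * ((Nat.card {v // b v = i} : ℝ) - 2))
    (d := fun i => (Nat.card {v // b v = i} : ℝ) - 2) (cnsl_apply_of_adj_iff hG)]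
  refine Finset.sum_congr rfl fun i _ => ?_
  congr 3 <;> ring

end CN

section

open Subgroup

def IsACGroup (G : Type*) [Group G] : Prop :=
  ∀ g : G, g ∉ center G →
    ∀ x ∈ centralizer ({g} : Set G), ∀ y ∈ centralizer ({g} : Set G), x * y = y * x

namespace IsACGroup

variable {G : Type*} [Group G] {g h : G}

theorem centralizer_le_of_commute (hG : IsACGroup G) (hg : g ∉ center G)
    (hgh : g * h = h * g) :
    centralizer ({g} : Set G) ≤ centralizer ({h} : Set G) := fun x hx =>
  mem_centralizer_singleton_iff.2 <|
    hG g hg x hx h (mem_centralizer_singleton_iff.2 hgh.symm)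

theorem centralizer_eq_of_commute (hG : IsACGroup G) (hg : g ∉ center G) (hh : h ∉ center G)
    (hgh : g * h = h * g) : centralizer ({g} : Set G) = centralizer ({h} : Set G) :=
  le_antisymm (hG.centralizer_le_of_commute hg hgh) (hG.centralizer_le_of_commute hh hgh.symm)

theorem mem_centralizer_iff_centralizer_eq (hG : IsACGroup G) (hg : g ∉ center G)
    (hh : h ∉ center G) :
    h ∈ centralizer ({g} : Set G) ↔ centralizer ({h} : Set G) = centralizer ({g} : Set G) :=
  ⟨fun hhg => hG.centralizer_eq_of_commute hh hg (mem_centralizer_singleton_iff.1 hhg),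
    fun heq => heq ▸ mem_centralizer_singleton_iff.2 rfl⟩

theorem commutingGraph_adj_iff (hG : IsACGroup G) (v w : {x : G // x ∉ center G}) :
    (commutingGraph G).Adj v w ↔
      v ≠ w ∧ centralizer ({(v : G)} : Set G) = centralizer ({(w : G)} : Set G) := by
  refine and_congr_right fun _ => ⟨hG.centralizer_eq_of_commute v.2 w.2, fun heq => ?_⟩
  have hwv := (hG.mem_centralizer_iff_centralizer_eq v.2 w.2).2 heq.symm
  exact (mem_centralizer_singleton_iff.1 hwv).symm

theorem card_subtype_centralizer_eq [Finite G] (hG : IsACGroup G) (hg : g ∉ center G) :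
    Nat.card {v : {x : G // x ∉ center G} //
        centralizer ({(v : G)} : Set G) = centralizer ({g} : Set G)} =
      Nat.card (centralizer ({g} : Set G)) - Nat.card (center G) := by
  have e : {v : {x : G // x ∉ center G} //
        centralizer ({(v : G)} : Set G) = centralizer ({g} : Set G)} ≃
      ↥((centralizer ({g} : Set G) : Set G) \ center G) :=
    { toFun := fun v => ⟨v.1, (hG.mem_centralizer_iff_centralizer_eq hg v.1.2).2 v.2, v.1.2⟩
      invFun := fun x =>
        ⟨⟨x, x.2.2⟩, (hG.mem_centralizer_iff_centralizer_eq hg x.2.2).1 x.2.1⟩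
      left_inv := fun _ => rfl
      right_inv := fun _ => rfl }
  rw [Nat.card_congr e, Nat.card_coe_set_eq, Set.ncard_sdiff (center_le_centralizer _)]
  rfl

end IsACGroup

end

theorem cnl_spectra_AC_group_general
    (G : Type*) [Group G] [Fintype G]
    (hAC : ∀ g : G, g ∉ Subgroup.center G →
      ∀ x ∈ Subgroup.centralizer ({g} : Set G), ∀ y ∈ Subgroup.centralizer ({g} : Set G),
        x * y = y * x)
    (n : ℕ) (X : Fin n → Subgroup G) (hXinj : Function.Injective X)
    (hX : ∀ H : Subgroup G,
      (∃ g : G, g ∉ Subgroup.center G ∧ H = Subgroup.centralizer ({g} : Set G)) ↔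
        ∃ i : Fin n, H = X i)
    (z : ℕ) (hz : z = Nat.card (Subgroup.center G)) :
    cnlSpec (commutingGraph G) =
      Multiset.replicate n (0 : ℝ) +
        ∑ i : Fin n,
          Multiset.replicate (Nat.card (X i) - z - 1)
            (((Nat.card (X i) : ℝ) - (z : ℝ)) * ((Nat.card (X i) : ℝ) - (z : ℝ) - 2)) ∧
    cnslSpec (commutingGraph G) =
      ∑ i : Fin n,
        (Multiset.replicate 1
            (2 * ((Nat.card (X i) : ℝ) - (z : ℝ) - 1) * ((Nat.card (X i) : ℝ) - (z : ℝ) - 2)) +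
          Multiset.replicate (Nat.card (X i) - z - 1)
            (((Nat.card (X i) : ℝ) - (z : ℝ) - 2) ^ 2)) := by
  choose idx hidx using fun v : {g : G // g ∉ Subgroup.center G} => (hX _).1 ⟨v, v.2, rfl⟩
  choose g hg hXg using fun i => (hX (X i)).2 ⟨i, rfl⟩
  have hfibre (v) (i) : idx v = i ↔
      Subgroup.centralizer {(v : G)} = Subgroup.centralizer {g i} := by
    rw [hidx, ← hXg, hXinj.eq_iff]
  have hsurj : Function.Surjective idx := fun i => ⟨⟨g i, hg i⟩, (hfibre _ _).2 rfl⟩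
  have hadj (v w) : (commutingGraph G).Adj v w ↔ v ≠ w ∧ idx v = idx w := by
    rw [IsACGroup.commutingGraph_adj_iff hAC, hidx, hidx, hXinj.eq_iff]
  have hcard (i) : Nat.card {v // idx v = i} = Nat.card (X i) - z := by
    rw [Nat.card_congr (Equiv.subtypeEquivRight (hfibre · i)),
      IsACGroup.card_subtype_centralizer_eq hAC (hg i), hXg, hz]
  have hcast (i) : (Nat.card {v // idx v = i} : ℝ) = Nat.card (X i) - z := by
    rw [hcard, Nat.cast_sub <|
      hz ▸ hXg i ▸ Subgroup.card_le_of_le (Subgroup.center_le_centralizer _)]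
  rw [cnlSpec_of_adj_iff hsurj hadj, cnslSpec_of_adj_iff hsurj hadj]
  simp only [hcast]
  simp only [hcard]
  refine ⟨?_, by simp only [add_comm, Multiset.replicate_one]⟩
  rw [Finset.sum_add_distrib, Finset.sum_const, Finset.card_univ, Fintype.card_fin,
    Multiset.nsmul_singleton, add_comm]

/-- CNL/CNSL spectra of the commuting graph of a finite non-abelian AC-group, where
`X 0, …, X (n-1)` are the distinct centralizers of non-central elements and `z = |Z(G)|`. -/
theorem cnl_spectra_AC_group
    (G : Type*) [Group G] [Fintype G] (hna : ¬∀ x y : G, x * y = y * x)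
    (hAC : ∀ g : G, g ∉ Subgroup.center G →
      ∀ x ∈ Subgroup.centralizer ({g} : Set G), ∀ y ∈ Subgroup.centralizer ({g} : Set G),
        x * y = y * x)
    (n : ℕ) (X : Fin n → Subgroup G) (hXinj : Function.Injective X)
    (hX : ∀ H : Subgroup G,
      (∃ g : G, g ∉ Subgroup.center G ∧ H = Subgroup.centralizer ({g} : Set G)) ↔
        ∃ i : Fin n, H = X i)
    (z : ℕ) (hz : z = Nat.card (Subgroup.center G)) :
    cnlSpec (commutingGraph G) =
      Multiset.replicate n (0 : ℝ) +
        ∑ i : Fin n,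
          Multiset.replicate (Nat.card (X i) - z - 1)
            (((Nat.card (X i) : ℝ) - (z : ℝ)) * ((Nat.card (X i) : ℝ) - (z : ℝ) - 2)) ∧
    cnslSpec (commutingGraph G) =
      ∑ i : Fin n,
        (Multiset.replicate 1
            (2 * ((Nat.card (X i) : ℝ) - (z : ℝ) - 1) * ((Nat.card (X i) : ℝ) - (z : ℝ) - 2)) +
          Multiset.replicate (Nat.card (X i) - z - 1)
            (((Nat.card (X i) : ℝ) - (z : ℝ) - 2) ^ 2)) :=
  cnl_spectra_AC_group_general G hAC n X hXinj hX z hz
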